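/- Let N₁, N₂, R₁, R₂ be mutually independent random variables on a probability space (Ω, ℱ, ℙ), where N₁ and N₂ take values in {1, …, N_max} with common pmf p_N and R₁, R₂ take values in a finite set {r_1, …, r_m} of positive reals with common pmf p_R. Suppose the inter-generation time Δt is exponentially distributed with rate λ > 0, independent of (N₁, N₂, R₁, R₂), and let Δt' = Δt + (nΘ/K)(N₂/R₂ − N₁/R₁) with n, K positive integers, Θ > 0. Writing s_{i,k,j,l} = (nΘ/K)(k/r_i − l/r_j), for every real x satisfying x ≥ s_{i,k,j,l} for all indices i, k, j, l: ℙ(Δt' ≤ x) = 1 − e^{−λx} · Σ_{i=1}^{m} Σ_{k=1}^{N_max} Σ_{j=1}^{m} Σ_{l=1}^{N_max} p_N(k) p_R(r_i) p_N(l) p_R(r_j) · e^{λ s_{i,k,j,l}}. -/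

import Mathlib

/-!
Split `Ω` into the finitely many cells on which `(N₁, N₂, R₁, R₂)` is constant. On the cell
where `N₂/R₂ − N₁/R₁` takes the value with shift `s`, the event `Δt' ≤ x` is `Δt ≤ x − s`, and
by independence its probability is the weight of the cell times `1 − e^{−λ(x − s)}`; the
hypothesis `x ≥ s` is exactly what keeps us on the exponential branch of the CDF. Summing over
cells, the weights add up to `1`.
-/

open MeasureTheory ProbabilityTheory Finset

theorem preimage_singleton_inter_setOf_add_le {Ω β : Type*} (X : Ω → ℝ) (Y : Ω → β)
    (g : β → ℝ) (x : ℝ) (y : β) :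
    Y ⁻¹' {y} ∩ {ω | X ω + g (Y ω) ≤ x} = Y ⁻¹' {y} ∩ X ⁻¹' Set.Iic (x - g y) := by
  ext ω
  simp +contextual [le_sub_iff_add_le]

section

variable {Ω : Type*} [MeasurableSpace Ω] {μ : Measure Ω}

theorem measureReal_eq_sum_preimage_singleton_inter [IsFiniteMeasure μ] {β ι : Type*}
    [MeasurableSpace β] [MeasurableSingletonClass β] {Y : Ω → β} (hY : Measurable Y)
    {T : Finset ι} {φ : ι → β} (hφ : Set.InjOn φ T) (hcover : ∀ ω, ∃ t ∈ T, Y ω = φ t)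
    (E : Set Ω) :
    μ.real E = ∑ t ∈ T, μ.real (Y ⁻¹' {φ t} ∩ E) := by
  classical
  have hpre : Y ⁻¹' ↑(T.image φ) = Set.univ := Set.eq_univ_of_forall fun ω => by
    obtain ⟨t, ht, h⟩ := hcover ω
    simpa [h] using ⟨t, ht, rfl⟩
  have := sum_measureReal_preimage_singleton (μ := μ.restrict E) (T.image φ)
    (fun y _ => hY (measurableSet_singleton y))
  rw [hpre, measureReal_restrict_apply_univ, sum_image hφ] at this
  simpa [measureReal_restrict_apply (hY (measurableSet_singleton _))] using this.symm

theorem measureReal_setOf_add_le_eq_sum [IsFiniteMeasure μ] {β ι : Type*}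
    [MeasurableSpace β] [MeasurableSingletonClass β] {Y : Ω → β} (hY : Measurable Y)
    {T : Finset ι} {φ : ι → β} (hφ : Set.InjOn φ T) (hcover : ∀ ω, ∃ t ∈ T, Y ω = φ t)
    (X : Ω → ℝ) (g : β → ℝ) (x : ℝ) :
    μ.real {ω | X ω + g (Y ω) ≤ x} =
      ∑ t ∈ T, μ.real (Y ⁻¹' {φ t} ∩ X ⁻¹' Set.Iic (x - g (φ t))) := by
  rw [measureReal_eq_sum_preimage_singleton_inter hY hφ hcover]
  simp only [preimage_singleton_inter_setOf_add_le]

theorem sum_measureReal_preimage_singleton_eq_one [IsProbabilityMeasure μ] {β ι : Type*}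
    [MeasurableSpace β] [MeasurableSingletonClass β] {Y : Ω → β} (hY : Measurable Y)
    {T : Finset ι} {φ : ι → β} (hφ : Set.InjOn φ T) (hcover : ∀ ω, ∃ t ∈ T, Y ω = φ t) :
    ∑ t ∈ T, μ.real (Y ⁻¹' {φ t}) = 1 := by
  simpa using (measureReal_eq_sum_preimage_singleton_inter (μ := μ) hY hφ hcover Set.univ).symm

theorem ProbabilityTheory.iIndepFun.measureReal_preimage_singleton_inter {β : Type*}
    [MeasurableSpace β] [MeasurableSingletonClass β] {X Y₁ Y₂ Y₃ Y₄ : Ω → β}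
    (h : iIndepFun ![X, Y₁, Y₂, Y₃, Y₄] μ) (y : β × β × β × β) {A : Set β}
    (hA : MeasurableSet A) :
    μ.real ((fun ω => (Y₁ ω, Y₂ ω, Y₃ ω, Y₄ ω)) ⁻¹' {y} ∩ X ⁻¹' A) =
      μ.real (X ⁻¹' A) * μ.real (Y₁ ⁻¹' {y.1}) * μ.real (Y₂ ⁻¹' {y.2.1}) *
        μ.real (Y₃ ⁻¹' {y.2.2.1}) * μ.real (Y₄ ⁻¹' {y.2.2.2}) := by
  obtain ⟨a, b, c, d⟩ := y
  have hsets : ∀ i, MeasurableSet (![A, {a}, {b}, {c}, {d}] i) := by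
    intro i
    fin_cases i <;> simp [hA]
  have := h.measure_inter_preimage_eq_mul univ (fun i _ => hsets i)
  simp only [measureReal_def]
  convert congrArg ENNReal.toReal this using 1
  · congr 2
    ext ω
    simp only [Set.mem_inter_iff, Set.mem_preimage, Set.mem_singleton_iff, Prod.ext_iff,
      mem_univ, Set.iInter_true, Set.mem_iInter, Fin.forall_fin_succ, Matrix.cons_val_zero,
      Matrix.cons_val_succ, IsEmpty.forall_iff, and_true]
    tauto
  · simp [Fin.prod_univ_five, ENNReal.toReal_mul]

theorem measureReal_preimage_Iic_sub_of_exp_cdf {X : Ω → ℝ} {lam : ℝ}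
    (hX : ∀ y, (μ {ω | X ω ≤ y}).toReal = if 0 ≤ y then 1 - Real.exp (-lam * y) else 0)
    {x s : ℝ} (hs : s ≤ x) :
    μ.real (X ⁻¹' Set.Iic (x - s)) = 1 - Real.exp (-lam * x) * Real.exp (lam * s) := by
  rw [measureReal_def, ← Real.exp_add]
  exact (hX (x - s)).trans (by rw [if_pos (sub_nonneg.2 hs)]; ring_nf)

end

theorem sum_sum_sum_sum_mul_eq_one {ι κ : Type*} (s : Finset ι) (t : Finset κ)
    (a : ι → ℝ) (b : κ → ℝ)
    (ha : ∑ i ∈ s, a i = 1) (hb : ∑ k ∈ t, b k = 1) :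
    ∑ i ∈ s, ∑ k ∈ t, ∑ j ∈ s, ∑ l ∈ t, b k * a i * b l * a j = 1 := by
  simp [← mul_sum, ← sum_mul, ha, hb]

theorem stmt13_general {Ω : Type*} [MeasurableSpace Ω] (μ : Measure Ω) [IsProbabilityMeasure μ]
    (Nmax m : ℕ) (Δt : Ω → ℝ) (N₁ N₂ : Ω → ℕ) (R₁ R₂ : Ω → ℝ)
    (hN₁ : Measurable N₁) (hN₂ : Measurable N₂)
    (hR₁ : Measurable R₁) (hR₂ : Measurable R₂)
    (hindep : iIndepFun
      ![Δt, fun ω => ((N₁ ω : ℝ)), fun ω => ((N₂ ω : ℝ)), R₁, R₂] μ)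
    (hN₁val : ∀ ω, N₁ ω ∈ Finset.Icc 1 Nmax) (hN₂val : ∀ ω, N₂ ω ∈ Finset.Icc 1 Nmax)
    (r : Fin m → ℝ) (hr : StrictMono r)
    (hR₁val : ∀ ω, ∃ i, R₁ ω = r i) (hR₂val : ∀ ω, ∃ i, R₂ ω = r i)
    (pN : ℕ → ℝ)
    (hpN₁ : ∀ k, pN k = (μ {ω | N₁ ω = k}).toReal)
    (hpN₂ : ∀ k, pN k = (μ {ω | N₂ ω = k}).toReal)
    (pR : Fin m → ℝ)
    (hpR₁ : ∀ i, pR i = (μ {ω | R₁ ω = r i}).toReal)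
    (hpR₂ : ∀ i, pR i = (μ {ω | R₂ ω = r i}).toReal)
    (lam : ℝ)
    (hΔtexp : ∀ y, (μ {ω | Δt ω ≤ y}).toReal =
      if 0 ≤ y then 1 - Real.exp (-lam * y) else 0)
    (n K : ℕ) (Θ : ℝ)
    (x : ℝ)
    (hx : ∀ (i j : Fin m), ∀ k ∈ Finset.Icc 1 Nmax, ∀ l ∈ Finset.Icc 1 Nmax,
      (n * Θ / K) * ((k : ℝ) / r i - (l : ℝ) / r j) ≤ x) :
    (μ {ω | Δt ω + (n * Θ / K) * ((N₂ ω : ℝ) / R₂ ω - (N₁ ω : ℝ) / R₁ ω) ≤ x}).toReal =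
      1 - Real.exp (-lam * x) *
        ∑ i : Fin m, ∑ k ∈ Finset.Icc 1 Nmax, ∑ j : Fin m, ∑ l ∈ Finset.Icc 1 Nmax,
          pN k * pR i * pN l * pR j *
            Real.exp (lam * ((n * Θ / K) * ((k : ℝ) / r i - (l : ℝ) / r j))) := by
  set S := Finset.Icc 1 Nmax
  let Y : Ω → ℝ × ℝ × ℝ × ℝ := fun ω => ((N₁ ω : ℝ), (N₂ ω : ℝ), R₁ ω, R₂ ω)
  let g : ℝ × ℝ × ℝ × ℝ → ℝ := fun y => n * Θ / K * (y.2.1 / y.2.2.2 - y.1 / y.2.2.1)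
  -- `Y` lists the variables in the order of `hindep`, cells are indexed in the order of the sum
  let φ : Fin m × ℕ × Fin m × ℕ → ℝ × ℝ × ℝ × ℝ := fun t => (t.2.2.2, t.2.1, r t.2.2.1, r t.1)
  let T : Finset (Fin m × ℕ × Fin m × ℕ) := univ ×ˢ S ×ˢ univ ×ˢ S
  have hY : Measurable Y := by fun_prop
  have hφ : Set.InjOn φ T := fun ⟨i, k, j, l⟩ _ ⟨i', k', j', l'⟩ _ h => by
    simp_all [φ, hr.injective.eq_iff]
  have hcover : ∀ ω, ∃ t ∈ T, Y ω = φ t := fun ω => by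
    obtain ⟨i, hi⟩ := hR₂val ω
    obtain ⟨j, hj⟩ := hR₁val ω
    exact ⟨(i, N₂ ω, j, N₁ ω), by simp [T, hN₁val, hN₂val], by simp [Y, φ, hi, hj]⟩
  have hpN : ∑ k ∈ S, pN k = 1 := by
    simp only [hpN₁]
    exact sum_measureReal_preimage_singleton_eq_one hN₁ (Set.injOn_id _) fun ω => ⟨_, hN₁val ω, rfl⟩
  have hpR : ∑ i, pR i = 1 := by
    simp only [hpR₁]
    exact sum_measureReal_preimage_singleton_eq_one hR₁ hr.injective.injOn
      fun ω => (hR₁val ω).imp fun i hi => ⟨mem_univ i, hi⟩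
  have hcell : ∀ t ∈ T,
      μ.real (Y ⁻¹' {φ t} ∩ Δt ⁻¹' Set.Iic (x - g (φ t))) =
        pN t.2.1 * pR t.1 * pN t.2.2.2 * pR t.2.2.1 - Real.exp (-lam * x) *
          (pN t.2.1 * pR t.1 * pN t.2.2.2 * pR t.2.2.1 * Real.exp (lam * g (φ t))) := by
    rintro ⟨i, k, j, l⟩ ht
    simp only [T, mem_product, mem_univ, true_and] at ht
    rw [hindep.measureReal_preimage_singleton_inter _ measurableSet_Iic,
      measureReal_preimage_Iic_sub_of_exp_cdf hΔtexp (hx i j k ht.1 l ht.2)]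
    simp only [φ, Set.preimage, Set.mem_singleton_iff, Nat.cast_inj, measureReal_def,
      ← hpN₁, ← hpN₂, ← hpR₁, ← hpR₂]
    ring
  change μ.real {ω | Δt ω + g (Y ω) ≤ x} = _
  rw [measureReal_setOf_add_le_eq_sum hY hφ hcover, sum_congr rfl hcell]
  simp only [T, sum_product, sum_sub_distrib, ← mul_sum]
  rw [sum_sum_sum_sum_mul_eq_one _ _ _ _ hpR hpN]

/-- Exponential inter-generation times (Eq. (51), shifted-exponential form): if `Δt` is
exponential with rate `λ` and `Δt' = Δt + (nΘ/K)(N₂/R₂ − N₁/R₁)`, then with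
`s = (nΘ/K)(k/r_i − l/r_j)`, for every `x` with `x ≥ s` for all indices,
`ℙ(Δt' ≤ x) = 1 − e^{−λx} Σ_i Σ_k Σ_j Σ_l p_N(k) p_R(r_i) p_N(l) p_R(r_j) e^{λ s}`. -/
theorem stmt13 {Ω : Type*} [MeasurableSpace Ω] (μ : Measure Ω) [IsProbabilityMeasure μ]
    (Nmax m : ℕ) (Δt : Ω → ℝ) (N₁ N₂ : Ω → ℕ) (R₁ R₂ : Ω → ℝ)
    (hΔt : Measurable Δt)
    (hN₁ : Measurable N₁) (hN₂ : Measurable N₂)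
    (hR₁ : Measurable R₁) (hR₂ : Measurable R₂)
    (hindep : iIndepFun
      ![Δt, fun ω => ((N₁ ω : ℝ)), fun ω => ((N₂ ω : ℝ)), R₁, R₂] μ)
    (hN₁val : ∀ ω, N₁ ω ∈ Finset.Icc 1 Nmax) (hN₂val : ∀ ω, N₂ ω ∈ Finset.Icc 1 Nmax)
    (r : Fin m → ℝ) (hr : StrictMono r) (hrpos : ∀ i, 0 < r i)
    (hR₁val : ∀ ω, ∃ i, R₁ ω = r i) (hR₂val : ∀ ω, ∃ i, R₂ ω = r i)
    (pN : ℕ → ℝ)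
    (hpN₁ : ∀ k, pN k = (μ {ω | N₁ ω = k}).toReal)
    (hpN₂ : ∀ k, pN k = (μ {ω | N₂ ω = k}).toReal)
    (pR : Fin m → ℝ)
    (hpR₁ : ∀ i, pR i = (μ {ω | R₁ ω = r i}).toReal)
    (hpR₂ : ∀ i, pR i = (μ {ω | R₂ ω = r i}).toReal)
    (lam : ℝ) (hlam : 0 < lam)
    (hΔtexp : ∀ y, (μ {ω | Δt ω ≤ y}).toReal =
      if 0 ≤ y then 1 - Real.exp (-lam * y) else 0)
    (n K : ℕ) (hn : 0 < n) (hK : 0 < K) (Θ : ℝ) (hΘ : 0 < Θ)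
    (x : ℝ)
    (hx : ∀ (i j : Fin m), ∀ k ∈ Finset.Icc 1 Nmax, ∀ l ∈ Finset.Icc 1 Nmax,
      (n * Θ / K) * ((k : ℝ) / r i - (l : ℝ) / r j) ≤ x) :
    (μ {ω | Δt ω + (n * Θ / K) * ((N₂ ω : ℝ) / R₂ ω - (N₁ ω : ℝ) / R₁ ω) ≤ x}).toReal =
      1 - Real.exp (-lam * x) *
        ∑ i : Fin m, ∑ k ∈ Finset.Icc 1 Nmax, ∑ j : Fin m, ∑ l ∈ Finset.Icc 1 Nmax,
          pN k * pR i * pN l * pR j *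
            Real.exp (lam * ((n * Θ / K) * ((k : ℝ) / r i - (l : ℝ) / r j))) :=
  stmt13_general μ Nmax m Δt N₁ N₂ R₁ R₂ hN₁ hN₂ hR₁ hR₂ hindep hN₁val hN₂val r hr hR₁val hR₂val pN
    hpN₁ hpN₂ pR hpR₁ hpR₂ lam hΔtexp n K Θ x hx
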